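/- Let Q₁ ∈ CRPQ(a) with the single canonical model K (variables as nodes, one edge per atom), and let Q₂ be any CRPQ. Then Q₁ ⊆ Q₂ if and only if there is a satisfying homomorphism from Q₂ to K mapping each distinguished variable of Q₂ to the corresponding distinguished variable of Q₁. -/

import Mathlib

/-- A knowledge base: a finite, edge-labeled directed graph over the label set `Λ`. -/
structure KB (Λ : Type) : Type 1 where
  /-- the nodes -/
  V : Type
  /-- there are finitely many nodes -/
  fin : Fintype V
  /-- the labeled edges -/
  E : V → Λ → V → Prop

/-- `IsWalk E x y p`: `p` is a path (list of labeled edges, each in `E`) from `x` to `y`. -/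
def IsWalk {V Λ : Type} (E : V → Λ → V → Prop) : V → V → List (V × Λ × V) → Prop
  | x, y, [] => x = y
  | x, y, e :: p => x = e.1 ∧ E e.1 e.2.1 e.2.2 ∧ IsWalk E e.2.2 y p

/-- The label of a path: the word formed by its edge labels. -/
def walkLabel {V Λ : Type} (p : List (V × Λ × V)) : List Λ := p.map fun e => e.2.1

/-- A conjunctive regular path query `Q(x₁, …, x_n) ← ⋀ᵢ y_{2i−1} Rᵢ y_{2i}`:
finitely many variables, a list of distinguished variables (each of which occurs in some
atom), and a list of atoms `(y, R, z)` with `R` a regular expression. -/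
structure CRPQ (Λ : Type) : Type 1 where
  /-- the variables -/
  Var : Type
  /-- there are finitely many variables -/
  finVar : Fintype Var
  /-- the distinguished variables `x₁, …, x_n` -/
  dist : List Var
  /-- the atoms `y R z` -/
  atoms : List (Var × RegularExpression Λ × Var)
  /-- every distinguished variable occurs in some atom -/
  dist_mem : ∀ x ∈ dist, ∃ t ∈ atoms, x = t.1 ∨ x = t.2.2

/-- `μ` is a satisfying homomorphism (embedding) from `Q` to `K`: every atom `y R z` is
witnessed by a path from `μ y` to `μ z` whose label lies in `L(R)`. -/
def Sat {Λ : Type} (Q : CRPQ Λ) (K : KB Λ) (μ : Q.Var → K.V) : Prop :=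
  ∀ t ∈ Q.atoms, ∃ p, IsWalk K.E (μ t.1) (μ t.2.2) p ∧ walkLabel p ∈ t.2.1.matches'

/-- The set of answers of `Q` over `K`: tuples of nodes realized by a satisfying
homomorphism on the distinguished variables. -/
def ans {Λ : Type} (Q : CRPQ Λ) (K : KB Λ) : Set (List K.V) :=
  { tup | ∃ μ : Q.Var → K.V, Sat Q K μ ∧ tup = Q.dist.map μ }

/-- `Q₁ ⊆ Q₂`: over every knowledge base, every answer of `Q₁` is an answer of `Q₂`. -/
def Contained {Λ : Type} (Q₁ Q₂ : CRPQ Λ) : Prop :=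
  ∀ K : KB Λ, ans Q₁ K ⊆ ans Q₂ K

/-- The node sequence of a path starting at `s`. -/
def nodeSeq {V Λ : Type} (s : V) (p : List (V × Λ × V)) : List V :=
  s :: p.map fun e => e.2.2

/-- A path is simple if its nodes are pairwise distinct, except that its start and end
node may coincide. -/
def IsSimplePath {V Λ : Type} (s : V) (p : List (V × Λ × V)) : Prop :=
  ∀ j k : Fin (nodeSeq s p).length, j < k →
    (nodeSeq s p).get j = (nodeSeq s p).get k →
      j.val = 0 ∧ k.val = (nodeSeq s p).length - 1

/-- The internal nodes of a path (its node sequence without start and end node). -/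
def internals {V Λ : Type} (s : V) (p : List (V × Λ × V)) : List V :=
  ((nodeSeq s p).drop 1).dropLast

/-- `K` is `ν`-canonical for `Q`: `K` consists exactly of one simple path per atom of
`Q`, these paths being node- and edge-disjoint except for their start and end nodes,
where the path for atom `y R z` connects `ν y` to `ν z` and its label lies in `L(R)`. -/
def IsCanonical {Λ : Type} (Q : CRPQ Λ) (K : KB Λ) (ν : Q.Var → K.V) : Prop :=
  ∃ π : Fin Q.atoms.length → List (K.V × Λ × K.V),
    (∀ i, IsWalk K.E (ν (Q.atoms.get i).1) (ν (Q.atoms.get i).2.2) (π i)) ∧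
    (∀ i, walkLabel (π i) ∈ (Q.atoms.get i).2.1.matches') ∧
    (∀ i, IsSimplePath (ν (Q.atoms.get i).1) (π i)) ∧
    (∀ i i', i ≠ i' → ∀ v ∈ internals (ν (Q.atoms.get i).1) (π i),
        v ∉ nodeSeq (ν (Q.atoms.get i').1) (π i')) ∧
    (∀ i i', i ≠ i' → ∀ e ∈ π i, e ∉ π i') ∧
    (∀ x a y, K.E x a y ↔ ∃ i, (x, a, y) ∈ π i) ∧
    (∀ v : K.V, ∃ i, v ∈ nodeSeq (ν (Q.atoms.get i).1) (π i))

/-- The single canonical model of a `CRPQ(a)` query `Q₁`: nodes are the variables of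
`Q₁`, with one edge `(y, a, z)` per atom `y a z`. -/
def queryGraph {Λ : Type} (Q : CRPQ Λ) : KB Λ :=
  ⟨Q.Var, Q.finVar, fun x a y => (x, RegularExpression.char a, y) ∈ Q.atoms⟩

/-!
The query graph of a `CRPQ(a)` query `Q₁`, with the identity assignment, is itself a model of
`Q₁` whose answer is `Q₁.dist`; so containment yields the required homomorphism. Conversely,
a match `ν` of `Q₁` in any `K` sends every edge of the query graph to a path of `K` with the
same one-letter label, hence every path to a path with the same label, and composing it with a
satisfying homomorphism from `Q₂` to the query graph gives a match of `Q₂` in `K`.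
-/

theorem IsWalk.append {V Λ : Type} {E : V → Λ → V → Prop} :
    ∀ {p q : List (V × Λ × V)} {x y z : V},
      IsWalk E x y p → IsWalk E y z q → IsWalk E x z (p ++ q)
  | [], _, _, _, _, rfl, hq => hq
  | _ :: _, _, _, _, _, ⟨hx, he, hp⟩, hq => ⟨hx, he, hp.append hq⟩

theorem walkLabel_append {V Λ : Type} (p q : List (V × Λ × V)) :
    walkLabel (p ++ q) = walkLabel p ++ walkLabel q :=
  List.map_append

theorem IsWalk.exists_map {V W Λ : Type} {E : V → Λ → V → Prop} {F : W → Λ → W → Prop}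
    {f : V → W} (hf : ∀ x a y, E x a y → ∃ q, IsWalk F (f x) (f y) q ∧ walkLabel q = [a]) :
    ∀ {p : List (V × Λ × V)} {x y : V},
      IsWalk E x y p → ∃ q, IsWalk F (f x) (f y) q ∧ walkLabel q = walkLabel p
  | [], _, _, rfl => ⟨[], rfl, rfl⟩
  | e :: _, _, _, ⟨rfl, he, hp⟩ => by
    obtain ⟨q₁, hq₁, hl₁⟩ := hf _ _ _ he
    obtain ⟨q₂, hq₂, hl₂⟩ := IsWalk.exists_map hf hp
    exact ⟨q₁ ++ q₂, hq₁.append hq₂, by rw [walkLabel_append, hl₁, hl₂]; rfl⟩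

theorem Sat.comp_queryGraph {Λ : Type} {Q₁ Q₂ : CRPQ Λ} {K : KB Λ}
    {μ : Q₂.Var → Q₁.Var} {ν : Q₁.Var → K.V}
    (hμ : Sat Q₂ (queryGraph Q₁) μ) (hν : Sat Q₁ K ν) : Sat Q₂ K (ν ∘ μ) := by
  have hedge : ∀ x a y, (queryGraph Q₁).E x a y →
      ∃ q, IsWalk K.E (ν x) (ν y) q ∧ walkLabel q = [a] := by
    intro x a y hxy
    obtain ⟨q, hq, hl⟩ := hν _ hxy
    rw [RegularExpression.matches'_char] at hl
    exact ⟨q, hq, hl⟩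
  intro t ht
  obtain ⟨p, hp, hl⟩ := hμ t ht
  obtain ⟨q, hq, hlq⟩ := hp.exists_map hedge
  exact ⟨q, hq, hlq ▸ hl⟩

theorem sat_queryGraph_id {Λ : Type} (Q : CRPQ Λ)
    (hchar : ∀ t ∈ Q.atoms, ∃ a : Λ, t.2.1 = RegularExpression.char a) :
    Sat Q (queryGraph Q) id := by
  rintro ⟨y, R, z⟩ ht
  obtain ⟨a, rfl⟩ := hchar _ ht
  refine ⟨[(y, a, z)], ⟨rfl, ht, rfl⟩, ?_⟩
  rw [RegularExpression.matches'_char]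
  rfl

theorem containment_of_crpq_a_iff_homomorphism_general {Λ : Type} (Q₁ Q₂ : CRPQ Λ)
    (hchar : ∀ t ∈ Q₁.atoms, ∃ a : Λ, t.2.1 = RegularExpression.char a) :
    Contained Q₁ Q₂ ↔
      ∃ μ : Q₂.Var → (queryGraph Q₁).V,
        Sat Q₂ (queryGraph Q₁) μ ∧ Q₂.dist.map μ = Q₁.dist := by
  constructor
  · intro hc
    have hans : Q₁.dist ∈ ans Q₁ (queryGraph Q₁) :=
      ⟨id, sat_queryGraph_id Q₁ hchar, (List.map_id _).symm⟩
    obtain ⟨μ, hμ, hdist⟩ := hc (queryGraph Q₁) hans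
    exact ⟨μ, hμ, hdist.symm⟩
  · rintro ⟨μ, hμ, hdist⟩ K _ ⟨ν, hν, rfl⟩
    exact ⟨ν ∘ μ, hμ.comp_queryGraph hν, by rw [← hdist]; exact List.map_map⟩

/-- Let `Q₁ ∈ CRPQ(a)` (every atom a single symbol, every variable occurring in some
atom) with single canonical model `K = queryGraph Q₁`, and let `Q₂` be any CRPQ. Then
`Q₁ ⊆ Q₂` iff there is a satisfying homomorphism from `Q₂` to `K` mapping the
distinguished variables of `Q₂` to the corresponding distinguished variables of `Q₁`. -/
theorem containment_of_crpq_a_iff_homomorphism {Λ : Type} (Q₁ Q₂ : CRPQ Λ)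
    (hchar : ∀ t ∈ Q₁.atoms, ∃ a : Λ, t.2.1 = RegularExpression.char a)
    (hcov : ∀ x : Q₁.Var, ∃ t ∈ Q₁.atoms, x = t.1 ∨ x = t.2.2) :
    Contained Q₁ Q₂ ↔
      ∃ μ : Q₂.Var → (queryGraph Q₁).V,
        Sat Q₂ (queryGraph Q₁) μ ∧ Q₂.dist.map μ = Q₁.dist :=
  containment_of_crpq_a_iff_homomorphism_general Q₁ Q₂ hchar
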